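/- arXiv:2305.01676 — 7 statements merged into one kernel-verified Lean document; each statement's English description precedes it below -/
import Mathlib

section
/- Let $a : (t_{\mathrm{ini}}, t_2) \to \mathbb{R}_{>0}$ be differentiable with $\lim_{t \to t_{\mathrm{ini}}^+} a(t) = 0$, where $t_{\mathrm{ini}} \in \mathbb{R}$ is finite. If the Hubble parameter $H(t) := \dot a(t)/a(t)$ converges to a finite nonnegative limit $H_\Lambda \ge 0$ as $t \to t_{\mathrm{ini}}^+$, then we reach a contradiction; i.e., if $a \to 0^+$ at a finite initial time, $H$ cannot tend to a finite nonnegative limit there. -/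
open Real Filter

/-- If the scale factor tends to `0` at a finite initial time `tini`, the Hubble
parameter `H = a'/a` cannot tend to a finite nonnegative limit as `t → tini⁺`. -/
theorem hubble_no_finite_limit_at_finite_bang
    (a : ℝ → ℝ) (tini t2 HΛ : ℝ) (htini : tini < t2)
    (ha_diff : ∀ t ∈ Set.Ioo tini t2, DifferentiableAt ℝ a t)
    (ha_pos : ∀ t ∈ Set.Ioo tini t2, 0 < a t)
    (ha_lim : Tendsto a (nhdsWithin tini (Set.Ioi tini)) (nhds 0))
    (hHΛ : 0 ≤ HΛ)
    (hH_lim : Tendsto (fun t => deriv a t / a t)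
      (nhdsWithin tini (Set.Ioi tini)) (nhds HΛ)) :
    False := by
  -- get a right-neighbourhood where H < HΛ + 1
  have hev : ∀ᶠ t in nhdsWithin tini (Set.Ioi tini),
      deriv a t / a t < HΛ + 1 :=
    (tendsto_order.1 hH_lim).2 (HΛ + 1) (by linarith)
  obtain ⟨u, hu, huset⟩ := (nhdsGT_basis tini).eventually_iff.1 hev
  -- pick tL in (tini, min u t2)
  set tL : ℝ := (tini + min u t2) / 2 with htLdef
  have hmin : tini < min u t2 := lt_min hu htini
  have htL1 : tini < tL := by simp only [htLdef]; linarith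
  have htL2 : tL < min u t2 := by simp only [htLdef]; linarith
  have htLu : tL < u := lt_of_lt_of_le htL2 (min_le_left _ _)
  have htLt2 : tL < t2 := lt_of_lt_of_le htL2 (min_le_right _ _)
  have htLmem : tL ∈ Set.Ioo tini t2 := ⟨htL1, htLt2⟩
  set M : ℝ := HΛ + 1 with hMdef
  have hMpos : 0 < M := by simp only [hMdef]; linarith
  set B : ℝ := Real.log (a tL) - M * (tL - tini) with hBdef
  -- lower bound on a on (tini, tL)
  have key : ∀ t ∈ Set.Ioo tini tL, Real.exp B ≤ a t := by
    intro t ht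
    have htmem : t ∈ Set.Ioo tini t2 := ⟨ht.1, lt_trans ht.2 htLt2⟩
    have hsub : Set.Icc t tL ⊆ Set.Ioo tini t2 := fun x hx =>
      ⟨lt_of_lt_of_le ht.1 hx.1, lt_of_le_of_lt hx.2 htLt2⟩
    have hcont : ContinuousOn (fun s => Real.log (a s)) (Set.Icc t tL) := by
      intro x hx
      exact (((ha_diff x (hsub hx)).continuousAt).continuousWithinAt).log
        (ne_of_gt (ha_pos x (hsub hx)))
    have hderiv : ∀ x ∈ Set.Ioo t tL,
        HasDerivAt (fun s => Real.log (a s)) (deriv a x / a x) x := by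
      intro x hx
      have hxmem : x ∈ Set.Ioo tini t2 :=
        ⟨lt_trans ht.1 hx.1, lt_trans hx.2 htLt2⟩
      exact ((ha_diff x hxmem).hasDerivAt).log (ne_of_gt (ha_pos x hxmem))
    obtain ⟨c, hc, hceq⟩ :=
      exists_hasDerivAt_eq_slope (fun s => Real.log (a s)) _ ht.2 hcont hderiv
    have hcmem : c ∈ Set.Ioo tini u := ⟨lt_trans ht.1 hc.1, lt_trans hc.2 htLu⟩
    have hcM : deriv a c / a c < M := huset hcmem
    have hslope : (Real.log (a tL) - Real.log (a t)) / (tL - t) < M := by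
      rw [← hceq]; exact hcM
    have htLpos : 0 < tL - t := by linarith [ht.2]
    have h1 : Real.log (a tL) - Real.log (a t) < M * (tL - t) :=
      (div_lt_iff₀ htLpos).1 hslope
    have h2 : M * (tL - t) ≤ M * (tL - tini) := by
      apply mul_le_mul_of_nonneg_left _ (le_of_lt hMpos)
      linarith [ht.1]
    have h3 : B ≤ Real.log (a t) := by simp only [hBdef]; linarith
    calc Real.exp B ≤ Real.exp (Real.log (a t)) := Real.exp_le_exp.2 h3
      _ = a t := Real.exp_log (ha_pos t htmem)
  -- contradiction with a → 0
  have hsmall : ∀ᶠ t in nhdsWithin tini (Set.Ioi tini), a t < Real.exp B :=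
    (tendsto_order.1 ha_lim).2 _ (Real.exp_pos B)
  have hIoo : ∀ᶠ t in nhdsWithin tini (Set.Ioi tini), t ∈ Set.Ioo tini tL :=
    Ioo_mem_nhdsGT_of_mem ⟨le_refl _, htL1⟩
  obtain ⟨t, ht1, ht2'⟩ := (hsmall.and hIoo).exists
  exact absurd (key t ht2') (not_le.2 ht1)
end

section
/- Let $a : (-\infty, t_{\max}) \to \mathbb{R}_{>0}$ be twice differentiable and suppose $H(t) = \dot a(t)/a(t) \to H_\Lambda$ and $\dot H(t) \to c$ as $t \to -\infty$, where $H_\Lambda > 0$ and $c \in \mathbb{R}$. Then $c = 0$. -/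
open Filter Set Topology

/- `H = ȧ / a` has a finite limit at `-∞` and `Ḣ` is its derivative, so `Ḣ` can only tend
to `0`: by the mean value theorem `H t - H (t - 1)` is a value of `Ḣ` on `(t - 1, t)`, and it
tends both to `0` and to `lim Ḣ`. -/

theorem hasDerivAt_deriv_div_self {𝕜 : Type*} [NontriviallyNormedField 𝕜] {f : 𝕜 → 𝕜} {t : 𝕜}
    (hf : DifferentiableAt 𝕜 f t) (hf' : DifferentiableAt 𝕜 (deriv f) t) (ht : f t ≠ 0) :
    HasDerivAt (fun s => deriv f s / f s)
      (deriv (deriv f) t / f t - (deriv f t / f t) ^ 2) t :=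
  (hf'.hasDerivAt.div hf.hasDerivAt ht).congr_deriv (by field_simp)

theorem eq_zero_of_tendsto_of_tendsto_deriv_atBot {f : ℝ → ℝ} {ℓ d : ℝ}
    (hf : ∀ᶠ t in atBot, DifferentiableAt ℝ f t) (hfℓ : Tendsto f atBot (𝓝 ℓ))
    (hfd : Tendsto (deriv f) atBot (𝓝 d)) : d = 0 := by
  obtain ⟨T, hT⟩ := eventually_atBot.mp hf
  have hmvt : ∀ t ≤ T, ∃ ξ ∈ Ioo (t - 1) t, deriv f ξ = f t - f (t - 1) := by
    intro t ht
    have hdiff : ∀ s ∈ Icc (t - 1) t, DifferentiableAt ℝ f s :=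
      fun s hs => hT s (hs.2.trans ht)
    obtain ⟨ξ, hξ, hslope⟩ := exists_deriv_eq_slope f (sub_one_lt t)
      (fun s hs => (hdiff s hs).continuousAt.continuousWithinAt)
      (fun s hs => (hdiff s (Ioo_subset_Icc_self hs)).differentiableWithinAt)
    exact ⟨ξ, hξ, by rw [hslope, sub_sub_cancel, div_one]⟩
  choose! ξ hξ hξ_eq using hmvt
  have hξ_bot : Tendsto ξ atBot atBot :=
    tendsto_atBot_mono' atBot (eventually_le_atBot T |>.mono fun t ht => (hξ t ht).2.le) tendsto_id
  have hstep_d : Tendsto (fun t => f t - f (t - 1)) atBot (𝓝 d) :=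
    (hfd.comp hξ_bot).congr' <| (eventually_le_atBot T).mono fun t ht => hξ_eq t ht
  have hstep_zero : Tendsto (fun t => f t - f (t - 1)) atBot (𝓝 0) := by
    simpa [sub_eq_add_neg] using
      hfℓ.sub (hfℓ.comp (tendsto_atBot_add_const_right atBot (-1) tendsto_id))
  exact tendsto_nhds_unique hstep_d hstep_zero

theorem hubble_derivative_limit_zero_general
    (a : ℝ → ℝ) (tmax HΛ c : ℝ)
    (ha_diff : ∀ t ∈ Set.Iio tmax, DifferentiableAt ℝ a t)
    (ha_diff2 : ∀ t ∈ Set.Iio tmax, DifferentiableAt ℝ (deriv a) t)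
    (ha_pos : ∀ t ∈ Set.Iio tmax, 0 < a t)
    (hH : Tendsto (fun t => deriv a t / a t) atBot (nhds HΛ))
    (hHdot : Tendsto
      (fun t => deriv (deriv a) t / a t - (deriv a t / a t) ^ 2)
      atBot (nhds c)) :
    c = 0 := by
  have hHubble : ∀ᶠ t in atBot, HasDerivAt (fun s => deriv a s / a s)
      (deriv (deriv a) t / a t - (deriv a t / a t) ^ 2) t :=
    (eventually_lt_atBot tmax).mono fun t ht =>
      hasDerivAt_deriv_div_self (ha_diff t ht) (ha_diff2 t ht) (ha_pos t ht).ne'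
  refine eq_zero_of_tendsto_of_tendsto_deriv_atBot
    (hHubble.mono fun t h => h.differentiableAt) hH (hHdot.congr' ?_)
  exact hHubble.mono fun t h => h.deriv.symm

/-- If `H → HΛ > 0` and `Ḣ → c` as `t → -∞`, then `c = 0`. -/
theorem hubble_derivative_limit_zero
    (a : ℝ → ℝ) (tmax HΛ c : ℝ) (hHΛ : 0 < HΛ)
    (ha_diff : ∀ t ∈ Set.Iio tmax, DifferentiableAt ℝ a t)
    (ha_diff2 : ∀ t ∈ Set.Iio tmax, DifferentiableAt ℝ (deriv a) t)
    (ha_pos : ∀ t ∈ Set.Iio tmax, 0 < a t)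
    (hH : Tendsto (fun t => deriv a t / a t) atBot (nhds HΛ))
    (hHdot : Tendsto
      (fun t => deriv (deriv a) t / a t - (deriv a t / a t) ^ 2)
      atBot (nhds c)) :
    c = 0 :=
  hubble_derivative_limit_zero_general a tmax HΛ c ha_diff ha_diff2 ha_pos hH hHdot
end

section
/- Let $h > 0$ and let $a : (-\infty, t_{\max}) \to \mathbb{R}_{>0}$ be continuous with $(a(t) - e^{ht})/e^{ht} \to 0$ as $t \to -\infty$. Define $\Theta(t) = 1/a(t) - e^{-ht}$. Then $\Theta(t)/e^{-ht} \to 0$ as $t \to -\infty$, and moreover $e^{ht} \int_t^{t_\mathrm{L}} \Theta(\tilde t)\, d\tilde t \to 0$ as $t \to -\infty$ for any fixed $t_\mathrm{L} < t_{\max}$. -/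
/-!
Inverting the asymptotic equivalence `a ~ e^{ht}` gives `1/a ~ e^{-ht}`, i.e. `Θ = o(e^{-ht})`.
A little-o relation `f = o(g)` with `g ≥ 0` survives integration over `[t, b]` as `t → -∞`
as soon as `∫_t^b g → ∞`, and `∫_t^{t_L} e^{-hs} ds = O(e^{-ht})`; hence
`∫_t^{t_L} Θ = o(e^{-ht})`.
-/

open Real Filter intervalIntegral Asymptotics MeasureTheory

theorem isLittleO_integral_atBot {E : Type*} [NormedAddCommGroup E] [NormedSpace ℝ E]
    {f : ℝ → E} {g : ℝ → ℝ} {b : ℝ}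
    (hf : ∀ t ≤ b, IntervalIntegrable f volume t b)
    (hg : ∀ t ≤ b, IntervalIntegrable g volume t b)
    (hg_nonneg : ∀ᶠ s in atBot, 0 ≤ g s) (hfg : f =o[atBot] g)
    (hg_int : Tendsto (fun t => ∫ s in t..b, g s) atBot atTop) :
    (fun t => ∫ s in t..b, f s) =o[atBot] fun t => ∫ s in t..b, g s := by
  refine isLittleO_iff.2 fun c hc => ?_
  obtain ⟨T, hTb, hT⟩ : ∃ T ≤ b, ∀ s ≤ T, ‖f s‖ ≤ c / 2 * g s := by
    obtain ⟨T, hT⟩ := eventually_atBot.1 (hg_nonneg.and (isLittleO_iff.1 hfg (half_pos hc)))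
    refine ⟨min T b, min_le_right _ _, fun s hs => ?_⟩
    obtain ⟨hgs, hfs⟩ := hT s (hs.trans (min_le_left _ _))
    rwa [Real.norm_of_nonneg hgs] at hfs
  -- the integrals over `[T, b]` are constants, negligible against `∫_t^b g → ∞`
  set K := ‖∫ s in T..b, f s‖ - c / 2 * ∫ s in T..b, g s
  filter_upwards [eventually_le_atBot T, hg_int.eventually_ge_atTop (2 * K / c)]
    with t htT hK
  have htb : t ≤ b := htT.trans hTb
  have hf_tT := (hf t htb).trans (hf T hTb).symm
  have hg_tT := (hg t htb).trans (hg T hTb).symm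
  have hnear : ‖∫ s in t..T, f s‖ ≤ c / 2 * ∫ s in t..T, g s := by
    rw [← intervalIntegral.integral_const_mul]
    exact norm_integral_le_of_norm_le htT
      (ae_of_all _ fun s hs => hT s hs.2) (hg_tT.const_mul _)
  have hK' : K ≤ c / 2 * ∫ s in t..b, g s := by
    rw [div_le_iff₀ hc] at hK
    linarith
  have hsplit_g : ∫ s in t..b, g s = (∫ s in t..T, g s) + ∫ s in T..b, g s :=
    (integral_add_adjacent_intervals hg_tT (hg T hTb)).symm
  calc ‖∫ s in t..b, f s‖
      = ‖(∫ s in t..T, f s) + ∫ s in T..b, f s‖ := by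
        rw [integral_add_adjacent_intervals hf_tT (hf T hTb)]
    _ ≤ c / 2 * (∫ s in t..T, g s) + ‖∫ s in T..b, f s‖ :=
        (norm_add_le _ _).trans (by linarith)
    _ = c / 2 * (∫ s in t..b, g s) + K := by
        rw [hsplit_g]
        ring
    _ ≤ c * ∫ s in t..b, g s := by linarith
    _ ≤ c * ‖∫ s in t..b, g s‖ := by gcongr; exact Real.le_norm_self _

section ExpNegMul

variable {h : ℝ}

theorem tendsto_exp_neg_mul_atBot (hh : 0 < h) :
    Tendsto (fun t => exp (-(h * t))) atBot atTop :=
  tendsto_exp_atTop.comp (tendsto_neg_atBot_atTop.comp (tendsto_id.const_mul_atBot hh))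

theorem integral_exp_neg_mul (hh : h ≠ 0) (a b : ℝ) :
    ∫ s in a..b, exp (-(h * s)) = h⁻¹ * (exp (-(h * a)) - exp (-(h * b))) := by
  simp [integral_comp_mul_left (fun x => exp (-x)) hh]

theorem tendsto_integral_exp_neg_mul_atBot (hh : 0 < h) (b : ℝ) :
    Tendsto (fun t => ∫ s in t..b, exp (-(h * s))) atBot atTop := by
  simp only [integral_exp_neg_mul hh.ne']
  exact (tendsto_atTop_add_const_right _ _ (tendsto_exp_neg_mul_atBot hh)).const_mul_atTop
    (inv_pos.2 hh)

theorem isBigO_integral_exp_neg_mul_atBot (hh : 0 < h) (b : ℝ) :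
    (fun t => ∫ s in t..b, exp (-(h * s))) =O[atBot] fun t => exp (-(h * t)) := by
  simp only [integral_exp_neg_mul hh.ne']
  refine ((isBigO_refl _ _).sub ?_).const_mul_left _
  exact (isLittleO_const_left.2 (.inr (tendsto_norm_atTop_atTop.comp
    (tendsto_exp_neg_mul_atBot hh)))).isBigO

end ExpNegMul

/-- Key estimate for continuous extendibility: if `a(t) = e^{ht} + o(e^{ht})` as
`t → -∞`, then `Θ := 1/a - e^{-ht}` is `o(e^{-ht})` and
`e^{ht} ∫_t^{tL} Θ → 0` as `t → -∞`. -/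
theorem theta_estimate
    (a : ℝ → ℝ) (tmax h : ℝ) (hh : 0 < h)
    (ha_cont : ContinuousOn a (Set.Iio tmax))
    (ha_pos : ∀ t ∈ Set.Iio tmax, 0 < a t)
    (ha_asym : Tendsto (fun t => (a t - Real.exp (h * t)) / Real.exp (h * t))
      atBot (nhds 0))
    (Θ : ℝ → ℝ) (hΘ : Θ = fun t => 1 / a t - Real.exp (-(h * t))) :
    Tendsto (fun t => Θ t / Real.exp (-(h * t))) atBot (nhds 0) ∧
      ∀ tL < tmax,
        Tendsto (fun t => Real.exp (h * t) * ∫ s in t..tL, Θ s)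
          atBot (nhds 0) := by
  have ha_equiv : a ~[atBot] fun t => exp (h * t) :=
    isLittleO_of_tendsto' (.of_forall fun t ht => absurd ht (exp_ne_zero _)) ha_asym
  have hΘ_o : Θ =o[atBot] fun t => exp (-(h * t)) := by
    simpa only [hΘ, one_div, exp_neg, Pi.sub_def, Pi.inv_def] using ha_equiv.inv.isLittleO
  refine ⟨hΘ_o.tendsto_div_nhds_zero, fun tL htL => ?_⟩
  have hΘ_cont : ContinuousOn Θ (Set.Iio tmax) := by
    rw [hΘ]
    exact (continuousOn_const.div ha_cont fun t ht => (ha_pos t ht).ne').sub (by fun_prop)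
  have hΘ_int : ∀ t ≤ tL, IntervalIntegrable Θ volume t tL := fun t ht =>
    (hΘ_cont.mono fun s hs => (Set.uIcc_of_le ht ▸ hs).2.trans_lt htL).intervalIntegrable
  have hexp_int : ∀ t ≤ tL, IntervalIntegrable (fun s => exp (-(h * s))) volume t tL :=
    fun t _ => (by fun_prop : Continuous fun s => exp (-(h * s))).intervalIntegrable _ _
  have hint : (fun t => ∫ s in t..tL, Θ s) =o[atBot] fun t => exp (-(h * t)) :=
    (isLittleO_integral_atBot hΘ_int hexp_int (.of_forall fun s => (exp_pos _).le) hΘ_o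
      (tendsto_integral_exp_neg_mul_atBot hh tL)).trans_isBigO
      (isBigO_integral_exp_neg_mul_atBot hh tL)
  simpa only [div_eq_mul_inv, ← exp_neg, neg_neg, mul_comm] using hint.tendsto_div_nhds_zero
end

section
/- Let $a : (-\infty, t_{\max}) \to \mathbb{R}_{>0}$ be differentiable with $H(t) = \dot a(t)/a(t) \to h > 0$ as $t \to -\infty$, and define $\eta(t) = -\int_t^{t_\mathrm{L}} \frac{d\tilde t}{a(\tilde t)}$ for a fixed $t_\mathrm{L} < t_{\max}$. Then $a(t)\eta(t) \to -1/h$ as $t \to -\infty$. -/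
open Real Filter intervalIntegral

/-- If the Hubble parameter `H = a'/a` tends to `h > 0` as `t → -∞`, then
`a·η → -1/h`, where `η(t) = -∫_t^{tL} ds/a(s)` is the conformal time. -/
theorem a_eta_limit_of_hubble_limit
    (a : ℝ → ℝ) (tmax h tL : ℝ) (hh : 0 < h) (htL : tL < tmax)
    (ha_diff : ∀ t ∈ Set.Iio tmax, DifferentiableAt ℝ a t)
    (ha_pos : ∀ t ∈ Set.Iio tmax, 0 < a t)
    (hH : Tendsto (fun t => deriv a t / a t) atBot (nhds h))
    (η : ℝ → ℝ) (hη : η = fun t => -(∫ s in t..tL, 1 / a s)) :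
    Tendsto (fun t => a t * η t) atBot (nhds (-(1 / h))) := by
  subst hη
  have ha_cont : ContinuousOn a (Set.Iio tmax) := fun t ht =>
    (ha_diff t ht).continuousAt.continuousWithinAt
  have hf_cont : ContinuousOn (fun s => (a s)⁻¹) (Set.Iio tmax) :=
    ha_cont.inv₀ (fun t ht => (ha_pos t ht).ne')
  have key : Tendsto (fun t => a t * ∫ s in t..tL, (a s)⁻¹) atBot (nhds (1/h)) := by
    rw [Metric.tendsto_nhds]
    intro δ hδ
    set ε := min (h/2) (δ * h^2 / 8) with hεdef
    have hε0 : 0 < ε := lt_min (by linarith) (by positivity)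
    have hεh : ε ≤ h/2 := min_le_left _ _
    have hεδ : ε ≤ δ * h^2 / 8 := min_le_right _ _
    clear_value ε
    clear hεdef
    -- choose t0 such that |H s - h| < ε for s ≤ t0
    obtain ⟨t0, ht0⟩ : ∃ t0, ∀ s ≤ t0, |deriv a s / a s - h| < ε := by
      have := (Metric.tendsto_nhds.mp hH) ε hε0
      simp only [Real.dist_eq, eventually_atBot] at this
      exact this
    set t1 := min t0 (tL - 1) with ht1def
    have ht1L : t1 < tL := lt_of_le_of_lt (min_le_right _ _) (by linarith)
    have ht1max : t1 < tmax := ht1L.trans htL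
    have hmem : ∀ s, s ≤ t1 → s ∈ Set.Iio tmax := fun s hs => lt_of_le_of_lt hs ht1max
    have hHs : ∀ s, s ≤ t1 → |deriv a s / a s - h| < ε := fun s hs =>
      ht0 s (hs.trans (min_le_left _ _))
    clear_value t1
    clear ht1def
    -- derivative of 1/a
    have hfder : ∀ s ∈ Set.Iio tmax, HasDerivAt (fun u => (a u)⁻¹)
        (-(deriv a s) / (a s)^2) s := fun s hs =>
      ((ha_diff s hs).hasDerivAt).inv (ha_pos s hs).ne'
    -- a → 0 at -∞
    have ha0 : Tendsto a atBot (nhds 0) := by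
      have hψ : MonotoneOn (fun u => Real.log (a u) - (h - ε) * u) (Set.Iic t1) := by
        apply monotoneOn_of_deriv_nonneg (convex_Iic t1)
        · intro u hu
          have hu' := hmem u hu
          exact (((ha_diff u hu').hasDerivAt.log (ha_pos u hu').ne').sub
            ((hasDerivAt_id u).const_mul (h - ε))).continuousAt.continuousWithinAt
        · intro u hu
          rw [interior_Iic] at hu
          have hu' := hmem u hu.le
          exact (((ha_diff u hu').hasDerivAt.log (ha_pos u hu').ne').sub
            ((hasDerivAt_id u).const_mul (h - ε))).differentiableAt.differentiableWithinAt
        · intro u hu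
          rw [interior_Iic] at hu
          have hu' := hmem u hu.le
          have hd : HasDerivAt (fun u => Real.log (a u) - (h - ε) * u)
              (deriv a u / a u - (h - ε) * 1) u :=
            ((ha_diff u hu').hasDerivAt.log (ha_pos u hu').ne').sub
              ((hasDerivAt_id u).const_mul (h - ε))
          rw [hd.deriv]
          have := abs_lt.mp (hHs u hu.le)
          linarith [this.1]
      have hbound : ∀ t ≤ t1, a t ≤ Real.exp (Real.log (a t1) - (h - ε) * t1 + (h - ε) * t) := by
        intro t ht
        have h2 := hψ ht (le_refl t1) ht
        simp only at h2
        have hpos := ha_pos t (hmem t ht)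
        calc a t = Real.exp (Real.log (a t)) := (Real.exp_log hpos).symm
          _ ≤ _ := Real.exp_le_exp.mpr (by linarith)
      have hexp0 : Tendsto (fun t => Real.exp (Real.log (a t1) - (h - ε) * t1 + (h - ε) * t))
          atBot (nhds 0) := by
        apply Real.tendsto_exp_atBot.comp
        apply tendsto_atBot_add_const_left
        exact (tendsto_const_mul_atBot_of_pos (by linarith)).mpr tendsto_id
      refine squeeze_zero' ?_ ?_ hexp0
      · filter_upwards [eventually_le_atBot t1] with t ht
        exact (ha_pos t (hmem t ht)).le
      · filter_upwards [eventually_le_atBot t1] with t ht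
        exact hbound t ht
    -- F and its derivative
    set f : ℝ → ℝ := fun s => (a s)⁻¹ with hfdef
    set F : ℝ → ℝ := fun t => ∫ s in t..t1, f s with hFdef
    have hfint : ∀ u v, u ≤ t1 → v ≤ t1 → IntervalIntegrable f MeasureTheory.volume u v := by
      intro u v hu hv
      apply ContinuousOn.intervalIntegrable
      apply hf_cont.mono
      intro s hs
      rcases Set.mem_uIcc.mp hs with ⟨_, h2⟩ | ⟨_, h2⟩
      · exact hmem s (h2.trans hv)
      · exact hmem s (h2.trans hu)
    have hFder : ∀ u ≤ t1, HasDerivAt F (-(f u)) u := by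
      intro u hu
      have h1 : HasDerivAt (fun v => ∫ s in t1..v, f s) (f u) u := by
        apply intervalIntegral.integral_hasDerivAt_right (hfint t1 u le_rfl hu)
        · exact ContinuousOn.stronglyMeasurableAtFilter isOpen_Iio hf_cont u (hmem u hu)
        · exact (hf_cont u (hmem u hu)).continuousAt (Iio_mem_nhds (hmem u hu))
      have h2 : F = fun v => -(∫ s in t1..v, f s) := by
        funext v
        exact intervalIntegral.integral_symm t1 v
      rw [h2]
      exact h1.neg
    -- bounds on F via monotonicity
    have hbounds : ∀ t ≤ t1, (f t - f t1)/(h + ε) ≤ F t ∧ F t ≤ (f t - f t1)/(h - ε) := by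
      have hGder : ∀ c : ℝ, 0 < c → ∀ u, u ≤ t1 →
          HasDerivAt (fun v => F v - (f v - f t1)/c) (-(f u) - ((-(deriv a u) / (a u)^2))/c) u := by
        intro c hc u hu
        exact (hFder u hu).sub ((((hfder u (hmem u hu)).sub_const (f t1))).div_const c)
      have hderval : ∀ u, u < t1 → (-(f u) - ((-(deriv a u) / (a u)^2))/(h+ε) ≤ 0 ∧
          0 ≤ -(f u) - ((-(deriv a u) / (a u)^2))/(h-ε)) := by
        intro u hu
        have hu' := hmem u hu.le
        have hA := ha_pos u hu'
        have hHu := abs_lt.mp (hHs u hu.le)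
        have hd1 : deriv a u / a u < h + ε := by linarith [hHu.2]
        have hd2 : h - ε < deriv a u / a u := by linarith [hHu.1]
        have hd1' : deriv a u < (h + ε) * a u := by
          rwa [div_lt_iff₀ hA] at hd1
        have hd2' : (h - ε) * a u < deriv a u := by
          rwa [lt_div_iff₀ hA] at hd2
        have hhe1 : (0:ℝ) < h + ε := by linarith
        have hhe2 : (0:ℝ) < h - ε := by linarith
        have hAne : a u ≠ 0 := hA.ne'
        constructor
        · have e1 : -(f u) - ((-(deriv a u) / (a u)^2))/(h+ε)
              = (deriv a u - (h+ε) * a u) / ((a u)^2 * (h+ε)) := by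
            simp only [hfdef]
            field_simp
            ring
          rw [e1]
          exact div_nonpos_of_nonpos_of_nonneg (by linarith) (by positivity)
        · have e2 : -(f u) - ((-(deriv a u) / (a u)^2))/(h-ε)
              = (deriv a u - (h-ε) * a u) / ((a u)^2 * (h-ε)) := by
            simp only [hfdef]
            field_simp
            ring
          rw [e2]
          exact div_nonneg (by linarith) (by positivity)
      intro t ht
      constructor
      · have hanti : AntitoneOn (fun v => F v - (f v - f t1)/(h+ε)) (Set.Iic t1) := by
          apply antitoneOn_of_deriv_nonpos (convex_Iic t1)
          · exact fun u hu => (hGder (h+ε) (by linarith) u hu).continuousAt.continuousWithinAt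
          · intro u hu
            rw [interior_Iic] at hu
            exact (hGder (h+ε) (by linarith) u hu.le).differentiableAt.differentiableWithinAt
          · intro u hu
            rw [interior_Iic] at hu
            rw [(hGder (h+ε) (by linarith) u hu.le).deriv]
            exact (hderval u hu).1
        have := hanti ht (le_refl t1) ht
        simp only [hFdef, intervalIntegral.integral_same, sub_self, zero_div, sub_zero, zero_sub] at this
        linarith [this]
      · have hmono : MonotoneOn (fun v => F v - (f v - f t1)/(h-ε)) (Set.Iic t1) := by
          apply monotoneOn_of_deriv_nonneg (convex_Iic t1)
          · exact fun u hu => (hGder (h-ε) (by linarith) u hu).continuousAt.continuousWithinAt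
          · intro u hu
            rw [interior_Iic] at hu
            exact (hGder (h-ε) (by linarith) u hu.le).differentiableAt.differentiableWithinAt
          · intro u hu
            rw [interior_Iic] at hu
            rw [(hGder (h-ε) (by linarith) u hu.le).deriv]
            exact (hderval u hu).2
        have := hmono ht (le_refl t1) ht
        simp only [hFdef, intervalIntegral.integral_same, sub_self, zero_div, sub_zero, zero_sub] at this
        linarith [this]
    -- integrability on [t1, tL] and the constant C
    have hCint : IntervalIntegrable f MeasureTheory.volume t1 tL := by
      apply ContinuousOn.intervalIntegrable
      apply hf_cont.mono
      intro s hs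
      rcases Set.mem_uIcc.mp hs with ⟨_, h2⟩ | ⟨_, h2⟩
      · exact lt_of_le_of_lt h2 htL
      · exact lt_of_le_of_lt (h2.trans ht1L.le) htL
    set C := ∫ s in t1..tL, f s with hCdef
    have hC0 : 0 ≤ C := by
      apply intervalIntegral.integral_nonneg ht1L.le
      intro s hs
      exact inv_nonneg.mpr (ha_pos s (lt_of_le_of_lt hs.2 htL)).le
    set B := f t1 with hBdef
    have hB0 : 0 ≤ B := inv_nonneg.mpr (ha_pos t1 (hmem t1 le_rfl)).le
    have hev1 : ∀ᶠ t in atBot, a t * B < δ * h / 8 := by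
      have := Metric.tendsto_nhds.mp (ha0.mul_const B) (δ * h / 8) (by positivity)
      filter_upwards [this] with t ht
      rw [Real.dist_eq, zero_mul, sub_zero] at ht
      exact lt_of_le_of_lt (le_abs_self _) ht
    have hev2 : ∀ᶠ t in atBot, a t * C < δ / 4 := by
      have := Metric.tendsto_nhds.mp (ha0.mul_const C) (δ / 4) (by positivity)
      filter_upwards [this] with t ht
      rw [Real.dist_eq, zero_mul, sub_zero] at ht
      exact lt_of_le_of_lt (le_abs_self _) ht
    filter_upwards [eventually_le_atBot t1, hev1, hev2] with t ht hEb hcC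
    have hsplit : (∫ s in t..tL, f s) = F t + C :=
      (intervalIntegral.integral_add_adjacent_intervals (hfint t t1 ht le_rfl) hCint).symm
    have hat : 0 < a t := ha_pos t (hmem t ht)
    have hatf : a t * f t = 1 := mul_inv_cancel₀ hat.ne'
    obtain ⟨hlo, hhi⟩ := hbounds t ht
    have hEb0 : 0 ≤ a t * B := mul_nonneg hat.le hB0
    have hcC0 : 0 ≤ a t * C := mul_nonneg hat.le hC0
    have hhe1 : (0:ℝ) < h + ε := by linarith
    have hhe2 : (0:ℝ) < h - ε := by linarith
    have hup : a t * F t ≤ (1 - a t * B)/(h - ε) := by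
      calc a t * F t ≤ a t * ((f t - B)/(h - ε)) := mul_le_mul_of_nonneg_left hhi hat.le
        _ = (a t * f t - a t * B)/(h - ε) := by ring
        _ = (1 - a t * B)/(h - ε) := by rw [hatf]
    have hlo' : (1 - a t * B)/(h + ε) ≤ a t * F t := by
      calc (1 - a t * B)/(h + ε) = (a t * f t - a t * B)/(h + ε) := by rw [hatf]
        _ = a t * ((f t - B)/(h + ε)) := by ring
        _ ≤ a t * F t := mul_le_mul_of_nonneg_left hlo hat.le
    rw [Real.dist_eq, hsplit, abs_sub_lt_iff]
    constructor
    · -- upper bound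
      have k1 : (1 - a t * B)/(h - ε) ≤ 1/(h - ε) :=
        (div_le_div_iff_of_pos_right hhe2).mpr (by linarith)
      have k2 : 1/(h - ε) - 1/h ≤ δ/4 := by
        rw [div_sub_div _ _ hhe2.ne' hh.ne', div_le_iff₀ (by positivity)]
        have hint : (h/2) * h ≤ (h - ε) * h :=
          mul_le_mul_of_nonneg_right (by linarith) hh.le
        nlinarith [hint, hδ, hεδ]
      have expand : a t * (F t + C) = a t * F t + a t * C := by ring
      linarith [hup, k1, k2, hcC]
    · -- lower bound
      have k3 : 1/h - (1 - a t * B)/(h + ε) < δ/2 := by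
        rw [div_sub_div _ _ hh.ne' hhe1.ne', div_lt_iff₀ (by positivity)]
        have h5 : h * (a t * B) < h * (δ * h / 8) := mul_lt_mul_of_pos_left hEb hh
        nlinarith [h5, mul_nonneg (mul_nonneg hδ.le hh.le) hε0.le]
      have expand : a t * (F t + C) = a t * F t + a t * C := by ring
      linarith [hlo', k3, hcC0]
  have := key.neg
  simpa [one_div, mul_neg] using this
end

section
/- Let $h > 0$ and $\varepsilon > 0$. Suppose $a : (-\infty, t_{\max}) \to \mathbb{R}_{>0}$ is differentiable with $(a(t) - e^{ht})/e^{(2+\varepsilon)ht} \to 0$ and $(\dot a(t) - h e^{ht})/e^{(2+\varepsilon)ht} \to 0$ as $t \to -\infty$. Then $H(t) = \dot a(t)/a(t) \to h$ as $t \to -\infty$, and there exists $c \in \mathbb{R}$ such that $\frac{1}{a(t)} + H(t)\eta(t) \to c$ as $t \to -\infty$, where $\eta(t) = -\int_t^{t_\mathrm{L}} \frac{d\tilde t}{a(\tilde t)}$ for a fixed $t_\mathrm{L}$. -/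
/-!
Write `Θ = 1/a - e^{-ht}`. Since `a = e^{ht} + o(e^{(2+ε)ht})`, we get `a ~ e^{ht}`,
`H → h`, and `Θ = o(e^{εht})`, so `Θ` is integrable near `-∞`. Splitting
`∫_t^{t_L} 1/a = (e^{-ht} - e^{-h t_L})/h + ∫_t^{t_L} Θ`, the divergent terms of `1/a` and
`H η` cancel up to `e^{-ht}(h - H)/h`, which is `o(e^{εht})` by the same estimate
applied to `ȧ`.
-/

open Real Filter intervalIntegral Asymptotics MeasureTheory Set Topology

lemma isLittleO_exp_mul_exp_mul_atBot {α β : ℝ} (hαβ : α < β) :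
    (fun t => exp (β * t)) =o[atBot] fun t => exp (α * t) := by
  rw [isLittleO_exp_comp_exp_comp]
  simpa only [← sub_mul, id_eq] using tendsto_id.const_mul_atBot_of_neg (sub_neg.2 hαβ)

lemma tendsto_exp_mul_atBot_nhds_zero {k : ℝ} (hk : 0 < k) :
    Tendsto (fun t => exp (k * t)) atBot (𝓝 0) :=
  tendsto_exp_atBot.comp (tendsto_id.const_mul_atBot hk)

lemma integral_exp_mul {c : ℝ} (hc : c ≠ 0) (x y : ℝ) :
    ∫ s in x..y, exp (c * s) = (exp (c * y) - exp (c * x)) / c := by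
  rw [integral_comp_mul_left (fun s => exp s) hc, integral_exp, smul_eq_mul, inv_mul_eq_div]

lemma integrableOn_Iic_of_isBigO_exp {E : Type*} [NormedAddCommGroup E] {f : ℝ → E} {k b : ℝ}
    (hk : 0 < k) (hf : ContinuousOn f (Iic b)) (hfO : f =O[atBot] fun t => exp (k * t)) :
    IntegrableOn f (Iic b) :=
  integrableOn_Iic_iff_integrableAtFilter_atBot.2
    ⟨hfO.integrableAtFilter
      ⟨Iic b, Iic_mem_atBot b, hf.aestronglyMeasurable measurableSet_Iic⟩
      ⟨Iic b, Iic_mem_atBot b, integrableOn_exp_mul_Iic hk b⟩,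
     hf.locallyIntegrableOn measurableSet_Iic⟩

lemma isLittleO_exp_mul_mul_inv {l : Filter ℝ} {a X : ℝ → ℝ} {α β γ δ : ℝ}
    (hδ : α + β - γ = δ) (hX : X =o[l] fun t => exp (β * t))
    (ha : a ~[l] fun t => exp (γ * t)) :
    (fun t => exp (α * t) * X t * (a t)⁻¹) =o[l] fun t => exp (δ * t) := by
  refine (((isBigO_refl _ l).mul_isLittleO hX).mul_isBigO ha.inv.isBigO).congr_right fun t => ?_
  simp only [Pi.inv_apply, ← exp_neg, ← exp_add, ← hδ]
  ring_nf

lemma tendsto_div_of_isEquivalent_const_mul {α : Type*} {l : Filter α} {u v w : α → ℝ}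
    {c : ℝ} (hu : u ~[l] v) (hw : w ~[l] fun x => c * v x) (hv : ∀ᶠ x in l, v x ≠ 0) :
    Tendsto (fun x => w x / u x) l (𝓝 c) := by
  refine ((hw.div hu).congr_right ?_).tendsto_const
  filter_upwards [hv] with x hx
  simp [hx]

section

variable {l : Filter ℝ} {a b : ℝ → ℝ} {h ε : ℝ}

lemma isLittleO_one_div_sub_exp_neg (ha : a ~[l] fun t => exp (h * t))
    (hA : (fun t => a t - exp (h * t)) =o[l] fun t => exp ((2 + ε) * h * t))
    (ha0 : ∀ᶠ t in l, a t ≠ 0) :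
    (fun t => 1 / a t - exp (-h * t)) =o[l] fun t => exp (ε * h * t) := by
  refine (isLittleO_exp_mul_mul_inv (α := -h) (by ring) hA.neg_left ha).congr' ?_ .rfl
  filter_upwards [ha0] with t ht
  rw [neg_mul, exp_neg]
  field_simp
  ring

lemma isLittleO_exp_neg_mul_sub_div (ha : a ~[l] fun t => exp (h * t))
    (hA : (fun t => a t - exp (h * t)) =o[l] fun t => exp ((2 + ε) * h * t))
    (hB : (fun t => b t - h * exp (h * t)) =o[l] fun t => exp ((2 + ε) * h * t))
    (ha0 : ∀ᶠ t in l, a t ≠ 0) :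
    (fun t => exp (-h * t) * (h - b t / a t)) =o[l] fun t => exp (ε * h * t) := by
  refine (isLittleO_exp_mul_mul_inv (α := -h) (by ring) ((hA.const_mul_left h).sub hB) ha).congr'
    ?_ .rfl
  filter_upwards [ha0] with t ht
  field_simp
  ring

end

/-- Conditions for `C¹` extendibility: if `a(t) = e^{ht} + o(e^{(2+ε)ht})` and
`a'(t) = h e^{ht} + o(e^{(2+ε)ht})` as `t → -∞`, then `H → h` and
`1/a + H·η` converges to a real number. -/
theorem C1_extendibility_conditions
    (a : ℝ → ℝ) (tmax h ε tL : ℝ) (hh : 0 < h) (hε : 0 < ε) (htL : tL < tmax)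
    (ha_diff : ∀ t ∈ Set.Iio tmax, DifferentiableAt ℝ a t)
    (ha_pos : ∀ t ∈ Set.Iio tmax, 0 < a t)
    (ha_asym : Tendsto
      (fun t => (a t - Real.exp (h * t)) / Real.exp ((2 + ε) * h * t))
      atBot (nhds 0))
    (ha'_asym : Tendsto
      (fun t => (deriv a t - h * Real.exp (h * t)) / Real.exp ((2 + ε) * h * t))
      atBot (nhds 0))
    (η : ℝ → ℝ) (hη : η = fun t => -(∫ s in t..tL, 1 / a s)) :
    Tendsto (fun t => deriv a t / a t) atBot (nhds h) ∧
      ∃ c : ℝ, Tendsto (fun t => 1 / a t + (deriv a t / a t) * η t)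
        atBot (nhds c) := by
  have hA := (isLittleO_iff_tendsto fun t ht => absurd ht (exp_ne_zero _)).2 ha_asym
  have hA' := (isLittleO_iff_tendsto fun t ht => absurd ht (exp_ne_zero _)).2 ha'_asym
  have hgap : (fun t => exp ((2 + ε) * h * t)) =o[atBot] fun t => exp (h * t) :=
    isLittleO_exp_mul_exp_mul_atBot (by nlinarith)
  have ha : a ~[atBot] fun t => exp (h * t) := hA.trans hgap
  have ha' : deriv a ~[atBot] fun t => h * exp (h * t) :=
    hA'.trans (hgap.const_mul_right' (Ne.isUnit hh.ne'))
  have ha0 : ∀ᶠ t in atBot, a t ≠ 0 :=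
    (eventually_lt_atBot tmax).mono fun t ht => (ha_pos t ht).ne'
  have hH := tendsto_div_of_isEquivalent_const_mul ha ha' (.of_forall fun t => exp_ne_zero _)
  refine ⟨hH, ?_⟩
  have hεh := tendsto_exp_mul_atBot_nhds_zero (mul_pos hε hh)
  have hΘ := isLittleO_one_div_sub_exp_neg ha hA ha0
  have hD := (isLittleO_exp_neg_mul_sub_div ha hA hA' ha0).trans_tendsto hεh
  have hcont : ContinuousOn (fun t => 1 / a t) (Iic tL) :=
    continuousOn_const.div
      (fun t ht => (ha_diff t (ht.trans_lt htL)).continuousAt.continuousWithinAt)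
      fun t ht => (ha_pos t (ht.trans_lt htL)).ne'
  have hΘint : IntegrableOn (fun t => 1 / a t - exp (-h * t)) (Iic tL) :=
    integrableOn_Iic_of_isBigO_exp (mul_pos hε hh) (hcont.sub (by fun_prop)) hΘ.isBigO
  have hJ := intervalIntegral_tendsto_integral_Iic tL hΘint tendsto_id
  refine ⟨_, (((hΘ.trans_tendsto hεh).add (hD.div_const h)).add
    (hH.mul ((tendsto_const_nhds (x := exp (-h * tL) / h)).sub hJ))).congr' ?_⟩
  filter_upwards [ha0, eventually_le_atBot tL] with t ht htl
  have hint : IntervalIntegrable (fun s => 1 / a s) volume t tL :=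
    (hcont.mono (by simpa [uIcc_of_le htl] using Icc_subset_Iic_self)).intervalIntegrable
  have hexp : Continuous fun s => exp (-h * s) := by fun_prop
  rw [hη, id_eq, integral_sub hint (hexp.intervalIntegrable t tL),
    integral_exp_mul (neg_ne_zero.2 hh.ne')]
  field_simp
  ring
end

section
/- Let $h > 0$ and $b \in \mathbb{R}$, and suppose $a : (-\infty, t_{\max}) \to \mathbb{R}_{>0}$ is twice differentiable with, as $t \to -\infty$: $a(t) = e^{ht} + b e^{3ht} + o(e^{3ht})$, $\dot a(t) = h e^{ht} + 3hb e^{3ht} + o(e^{3ht})$, and $\ddot a(t) = h^2 e^{ht} + 9h^2 b e^{3ht} + o(e^{3ht})$. Then $\dot H(t)/a(t)^2 \to 4bh^2$ as $t \to -\infty$, where $H = \dot a/a$ and $\dot H = \ddot a/a - H^2$. -/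
/-!
Write `e = exp (h t)`, so that `e → 0` as `t → -∞`, and read off from the hypotheses
`a = e + β₀ e³`, `ȧ = h e + β₁ e³`, `ä = h² e + β₂ e³` with `β₀ → b`, `β₁ → 3hb`, `β₂ → 9h²b`.
Then `Ḣ / a² = (ä a - ȧ²) / a⁴`, and the terms of order `e²` in `ä a - ȧ²` cancel, leaving
`Ḣ / a² = (β₂ + h² β₀ - 2h β₁ + (β₀ β₂ - β₁²) e²) / (1 + β₀ e²)⁴ → 9h²b + h²b - 6h²b = 4bh²`.
-/

open Real Filter Topology

lemma tendsto_coeff_of_expansion {α : Type*} {l : Filter α} (f g E : α → ℝ) {d : ℝ}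
    (hE : ∀ t, E t ≠ 0) (hf : Tendsto (fun t => (f t - (g t + d * E t)) / E t) l (𝓝 0)) :
    Tendsto (fun t => (f t - g t) / E t) l (𝓝 d) := by
  refine (by simpa using hf.const_add d : Tendsto _ l (𝓝 d)).congr fun t => ?_
  field_simp [hE t]
  ring

-- When `1 + β₀ e² = 0` both sides are `0`, by the convention `x / 0 = 0`.
lemma hdot_div_sq_eq_of_expansion {e h β₀ β₁ β₂ : ℝ} (he : e ≠ 0) :
    ((h ^ 2 * e + β₂ * e ^ 3) / (e + β₀ * e ^ 3)
        - ((h * e + β₁ * e ^ 3) / (e + β₀ * e ^ 3)) ^ 2) / (e + β₀ * e ^ 3) ^ 2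
      = (β₂ + h ^ 2 * β₀ - 2 * h * β₁ + (β₀ * β₂ - β₁ ^ 2) * e ^ 2) / (1 + β₀ * e ^ 2) ^ 4 := by
  rw [show e + β₀ * e ^ 3 = e * (1 + β₀ * e ^ 2) by ring]
  field_simp
  ring

lemma tendsto_hdot_div_sq_of_expansion {α : Type*} {l : Filter α} {a a' a'' e β₀ β₁ β₂ : α → ℝ}
    {h b₀ b₁ b₂ : ℝ} (he : Tendsto e l (𝓝 0)) (he₀ : ∀ t, e t ≠ 0)
    (ha : ∀ t, a t = e t + β₀ t * e t ^ 3) (ha' : ∀ t, a' t = h * e t + β₁ t * e t ^ 3)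
    (ha'' : ∀ t, a'' t = h ^ 2 * e t + β₂ t * e t ^ 3)
    (hβ₀ : Tendsto β₀ l (𝓝 b₀)) (hβ₁ : Tendsto β₁ l (𝓝 b₁)) (hβ₂ : Tendsto β₂ l (𝓝 b₂)) :
    Tendsto (fun t => (a'' t / a t - (a' t / a t) ^ 2) / a t ^ 2) l
      (𝓝 (b₂ + h ^ 2 * b₀ - 2 * h * b₁)) := by
  have he₂ : Tendsto (fun t => e t ^ 2) l (𝓝 0) := by simpa using he.pow 2
  have hq : Tendsto (fun t => 1 + β₀ t * e t ^ 2) l (𝓝 1) := by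
    simpa using (hβ₀.mul he₂).const_add 1
  have hnum : Tendsto (fun t => β₂ t + h ^ 2 * β₀ t - 2 * h * β₁ t
      + (β₀ t * β₂ t - β₁ t ^ 2) * e t ^ 2) l (𝓝 (b₂ + h ^ 2 * b₀ - 2 * h * b₁)) := by
    simpa using ((hβ₂.add (hβ₀.const_mul _)).sub (hβ₁.const_mul _)).add
      (((hβ₀.mul hβ₂).sub (hβ₁.pow 2)).mul he₂)
  have hlim := hnum.div (hq.pow 4) (by norm_num)
  rw [one_pow, div_one] at hlim
  refine hlim.congr fun t => ?_
  rw [Pi.div_apply, ha t, ha' t, ha'' t, hdot_div_sq_eq_of_expansion (he₀ t)]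

theorem Hdot_over_a_sq_limit_general
    (a : ℝ → ℝ) (h b : ℝ) (hh : 0 < h)
    (ha0 : Tendsto
      (fun t => (a t - (Real.exp (h * t) + b * Real.exp (3 * h * t))) /
        Real.exp (3 * h * t)) atBot (nhds 0))
    (ha1 : Tendsto
      (fun t => (deriv a t - (h * Real.exp (h * t) + 3 * h * b * Real.exp (3 * h * t))) /
        Real.exp (3 * h * t)) atBot (nhds 0))
    (ha2 : Tendsto
      (fun t => (deriv (deriv a) t -
        (h ^ 2 * Real.exp (h * t) + 9 * h ^ 2 * b * Real.exp (3 * h * t))) /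
        Real.exp (3 * h * t)) atBot (nhds 0)) :
    Tendsto
      (fun t => (deriv (deriv a) t / a t - (deriv a t / a t) ^ 2) / a t ^ 2)
      atBot (nhds (4 * b * h ^ 2)) := by
  have he : Tendsto (fun t => exp (h * t)) atBot (𝓝 0) :=
    tendsto_exp_atBot.comp (tendsto_id.const_mul_atBot hh)
  have hE : ∀ t, exp (3 * h * t) = exp (h * t) ^ 3 := fun t => by
    rw [← exp_nat_mul]; ring_nf
  have hsplit : ∀ (f g : ℝ → ℝ) t, f t = g t + (f t - g t) / exp (3 * h * t) * exp (h * t) ^ 3 :=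
    fun f g t => by rw [← hE, div_mul_cancel₀ _ (exp_ne_zero _)]; ring
  have hlim := tendsto_hdot_div_sq_of_expansion he (fun t => exp_ne_zero _)
    (hsplit a _) (hsplit (deriv a) _) (hsplit (deriv (deriv a)) _)
    (tendsto_coeff_of_expansion a _ _ (fun t => exp_ne_zero _) ha0)
    (tendsto_coeff_of_expansion (deriv a) _ _ (fun t => exp_ne_zero _) ha1)
    (tendsto_coeff_of_expansion (deriv (deriv a)) _ _ (fun t => exp_ne_zero _) ha2)
  rwa [show 9 * h ^ 2 * b + h ^ 2 * b - 2 * h * (3 * h * b) = 4 * b * h ^ 2 by ring] at hlim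

/-- If `a = e^{ht} + b e^{3ht} + o(e^{3ht})` with matching expansions for the
first two derivatives as `t → -∞`, then `Ḣ/a² → 4bh²`. -/
theorem Hdot_over_a_sq_limit
    (a : ℝ → ℝ) (tmax h b : ℝ) (hh : 0 < h)
    (ha_diff : ∀ t ∈ Set.Iio tmax, DifferentiableAt ℝ a t)
    (ha_diff2 : ∀ t ∈ Set.Iio tmax, DifferentiableAt ℝ (deriv a) t)
    (ha_pos : ∀ t ∈ Set.Iio tmax, 0 < a t)
    (ha0 : Tendsto
      (fun t => (a t - (Real.exp (h * t) + b * Real.exp (3 * h * t))) /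
        Real.exp (3 * h * t)) atBot (nhds 0))
    (ha1 : Tendsto
      (fun t => (deriv a t - (h * Real.exp (h * t) + 3 * h * b * Real.exp (3 * h * t))) /
        Real.exp (3 * h * t)) atBot (nhds 0))
    (ha2 : Tendsto
      (fun t => (deriv (deriv a) t -
        (h ^ 2 * Real.exp (h * t) + 9 * h ^ 2 * b * Real.exp (3 * h * t))) /
        Real.exp (3 * h * t)) atBot (nhds 0)) :
    Tendsto
      (fun t => (deriv (deriv a) t / a t - (deriv a t / a t) ^ 2) / a t ^ 2)
      atBot (nhds (4 * b * h ^ 2)) :=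
  Hdot_over_a_sq_limit_general a h b hh ha0 ha1 ha2
end

section
/- Define $a(t) = e^{t + \frac{1}{2}\sin t}$ for $t \in \mathbb{R}$. Then: (i) $a(t) \to 0$ as $t \to -\infty$; (ii) $\ddot a(t) > 0$ for all $t$; (iii) $H(t) := \dot a(t)/a(t) = 1 + \frac{1}{2}\cos t$ satisfies $\frac{1}{2} \le H(t) \le \frac{3}{2}$ for all $t$ but $H(t)$ does not converge as $t \to -\infty$. -/
/-!
Writing `a = exp ∘ φ` with `φ t = t + sin t / 2`, one has `ȧ / a = φ'` and `ä = a (φ'² + φ'')`,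
so everything reduces to trigonometry of `φ' t = 1 + cos t / 2`. This is `2π`-periodic and not
constant, and a periodic function with a limit at `-∞` must be constant.
-/

open Real Filter Topology

theorem Function.Periodic.eq_of_tendsto_atBot {α : Type*} [TopologicalSpace α] [T2Space α]
    {f : ℝ → α} {p : ℝ} {L : α} (hf : Function.Periodic f p) (hp : 0 < p)
    (h : Tendsto f atBot (𝓝 L)) (x : ℝ) : f x = L := by
  have hseq : Tendsto (fun n : ℕ => x - n * p) atTop atBot :=
    tendsto_atBot_add_const_left _ x <|
      tendsto_neg_atTop_atBot.comp (tendsto_natCast_atTop_atTop.atTop_mul_const hp)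
  refine tendsto_nhds_unique ?_ (h.comp hseq)
  simp only [Function.comp_def, hf.sub_nat_mul_eq]
  exact tendsto_const_nhds

theorem deriv_exp_comp {φ φ' : ℝ → ℝ} (hφ : ∀ t, HasDerivAt φ (φ' t) t) :
    deriv (fun t => exp (φ t)) = fun t => exp (φ t) * φ' t :=
  funext fun t => (hφ t).exp.deriv

theorem deriv_exp_comp_div_exp {φ φ' : ℝ → ℝ} (hφ : ∀ t, HasDerivAt φ (φ' t) t) (t : ℝ) :
    deriv (fun t => exp (φ t)) t / exp (φ t) = φ' t := by
  rw [deriv_exp_comp hφ, mul_div_cancel_left₀ _ (exp_ne_zero _)]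

theorem deriv_deriv_exp_comp {φ φ' φ'' : ℝ → ℝ} (hφ : ∀ t, HasDerivAt φ (φ' t) t)
    (hφ' : ∀ t, HasDerivAt φ' (φ'' t) t) (t : ℝ) :
    deriv (deriv fun t => exp (φ t)) t = exp (φ t) * (φ' t ^ 2 + φ'' t) := by
  rw [deriv_exp_comp hφ, ((hφ t).exp.fun_mul (hφ' t)).deriv]
  ring

theorem tendsto_add_sin_div_two_atBot : Tendsto (fun t => t + sin t / 2) atBot atBot :=
  tendsto_atBot_mono (fun t => by linarith [id_eq t, sin_le_one t])
    (tendsto_atBot_add_const_right _ (1 / 2) tendsto_id)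

/-- Four times the left side is `2 (1 + cos t)² + (1 - sin t)²`, and the two squares cannot vanish
together on the unit circle. -/
theorem one_add_cos_div_two_sq_sub_sin_div_two_pos (t : ℝ) :
    0 < (1 + cos t / 2) ^ 2 - sin t / 2 := by
  have h4 : 4 * ((1 + cos t / 2) ^ 2 - sin t / 2) = 2 * (1 + cos t) ^ 2 + (1 - sin t) ^ 2 := by
    linear_combination -sin_sq_add_cos_sq t
  have hsq : 0 < 2 * (1 + cos t) ^ 2 + (1 - sin t) ^ 2 := by
    rcases eq_or_ne (sin t) 1 with hs | hs
    · have hc : cos t = 0 := by nlinarith [sin_sq_add_cos_sq t]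
      rw [hs, hc]
      norm_num
    · have : 0 < (1 - sin t) ^ 2 := sq_pos_of_ne_zero (sub_ne_zero.2 hs.symm)
      positivity
  linarith

/-- For `a(t) = exp(t + (1/2) sin t)`: `a → 0` as `t → -∞`, `ä > 0` everywhere,
`H(t) = 1 + (1/2) cos t` is bounded between `1/2` and `3/2`, yet `H` has no
limit as `t → -∞`. -/
theorem oscillating_hubble_counterexample
    (a : ℝ → ℝ) (ha : a = fun t => Real.exp (t + Real.sin t / 2)) :
    Tendsto a atBot (nhds 0) ∧
    (∀ t : ℝ, 0 < deriv (deriv a) t) ∧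
    (∀ t : ℝ, deriv a t / a t = 1 + Real.cos t / 2) ∧
    (∀ t : ℝ, 1 / 2 ≤ deriv a t / a t ∧ deriv a t / a t ≤ 3 / 2) ∧
    ¬ ∃ L : ℝ, Tendsto (fun t => deriv a t / a t) atBot (nhds L) := by
  subst ha
  have hφ (t : ℝ) : HasDerivAt (fun t => t + sin t / 2) (1 + cos t / 2) t :=
    (hasDerivAt_id t).add ((hasDerivAt_sin t).div_const 2)
  have hφ' (t : ℝ) : HasDerivAt (fun t => 1 + cos t / 2) (-sin t / 2) t :=
    ((hasDerivAt_cos t).div_const 2).const_add 1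
  have hH := deriv_exp_comp_div_exp hφ
  refine ⟨tendsto_exp_atBot.comp tendsto_add_sin_div_two_atBot, fun t => ?_, hH, fun t => ?_, ?_⟩
  · rw [deriv_deriv_exp_comp hφ hφ']
    have := one_add_cos_div_two_sq_sub_sin_div_two_pos t
    exact mul_pos (exp_pos _) (by linarith)
  · rw [hH]
    constructor <;> linarith [neg_one_le_cos t, cos_le_one t]
  · rintro ⟨L, hL⟩
    have hper : Function.Periodic (fun t => 1 + cos t / 2) (2 * π) := fun t => by
      simp only [cos_periodic t]
    rw [funext hH] at hL
    have h0 := hper.eq_of_tendsto_atBot two_pi_pos hL 0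
    have hπ := hper.eq_of_tendsto_atBot two_pi_pos hL π
    simp only [cos_zero, cos_pi] at h0 hπ
    linarith
end
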